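/- (Proposition: uniqueness of propensity scores under distinct subset sums.) Let s be a natural number, β₀ ∈ ℝ and β : Fin s → ℝ such that for all finite index sets I, J ⊆ Fin s with I ≠ J one has ∑_{i ∈ I} β i ≠ ∑_{j ∈ J} β j. Then two binary covariate vectors x, z : Fin s → ℝ satisfy ps(x) = ps(z) if and only if x = z. -/
import Mathlib


/-- The logistic-regression propensity score of a covariate vector `v`. -/
noncomputable def ps {s : ℕ} (β₀ : ℝ) (β : Fin s → ℝ) (v : Fin s → ℝ) : ℝ :=
  Real.exp (β₀ + ∑ j, β j * v j) / (1 + Real.exp (β₀ + ∑ j, β j * v j))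

lemma logistic_inj {a b : ℝ}
    (h : Real.exp a / (1 + Real.exp a) = Real.exp b / (1 + Real.exp b)) : a = b := by
  have ha : (0:ℝ) < 1 + Real.exp a := by positivity
  have hb : (0:ℝ) < 1 + Real.exp b := by positivity
  have h2 : Real.exp a * (1 + Real.exp b) = Real.exp b * (1 + Real.exp a) := by
    field_simp at h; linarith
  have : Real.exp a = Real.exp b := by nlinarith
  exact Real.exp_injective this

lemma sum_binary {s : ℕ} (β : Fin s → ℝ) (x : Fin s → ℝ)
    (hx : ∀ j, x j = 0 ∨ x j = 1) :
    ∑ j, β j * x j = ∑ j ∈ Finset.univ.filter (fun j => x j = 1), β j := by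
  rw [Finset.sum_filter]
  apply Finset.sum_congr rfl
  intro j _
  rcases hx j with h | h <;> simp [h]

/-- Uniqueness of propensity scores under distinct subset sums: if all subset sums of the
coefficients are pairwise distinct, then two binary covariate vectors have equal propensity
scores iff they are equal. -/
theorem ps_eq_iff_eq_of_subsetSums_distinct {s : ℕ} (β₀ : ℝ) (β : Fin s → ℝ)
    (hβ : ∀ I J : Finset (Fin s), I ≠ J → ∑ i ∈ I, β i ≠ ∑ j ∈ J, β j)
    (x z : Fin s → ℝ)
    (hx : ∀ j, x j = 0 ∨ x j = 1) (hz : ∀ j, z j = 0 ∨ z j = 1) :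
    ps β₀ β x = ps β₀ β z ↔ x = z := by
  constructor
  · intro h
    have h1 : β₀ + ∑ j, β j * x j = β₀ + ∑ j, β j * z j := logistic_inj h
    have h2 : ∑ j, β j * x j = ∑ j, β j * z j := by linarith
    rw [sum_binary β x hx, sum_binary β z hz] at h2
    have hIJ : Finset.univ.filter (fun j => x j = 1) = Finset.univ.filter (fun j => z j = 1) := by
      by_contra hne
      exact hβ _ _ hne h2
    funext j
    rcases hx j with h | h <;> rcases hz j with h' | h' <;> try rw [h, h']
    · exfalso
      have : j ∈ Finset.univ.filter (fun j => z j = 1) := by simp [h']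
      rw [← hIJ] at this
      simp [h] at this
    · exfalso
      have : j ∈ Finset.univ.filter (fun j => x j = 1) := by simp [h]
      rw [hIJ] at this
      simp [h'] at this
  · rintro rfl; rfl
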